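/- arXiv:1807.00363 — 3 statements merged into one kernel-verified Lean document; each statement's English description precedes it below -/
import Mathlib

section
/- Let d ≥ 1 and N ≥ 1 be integers, let V ∈ C²(ℝ^d) satisfy ∫_{ℝ^d} e^{V(x)} dx = 1 and write μ_V for the probability measure e^{V(x)}dx on ℝ^d. For each k ∈ {1,…,N} let σ_k : ℝ^d → ℝ^{d×d} be continuous, let γ_k > 0, β_k ≥ 0, and let π_1,…,π_N > 0 with ∑_k π_k = 1. Assume that for each k and every f ∈ C_c^∞(ℝ^d) with ∫ f² dμ_V = 1 one has ∫ f² log f² dμ_V ≤ γ_k ∫ |σ_k(x)ᵀ∇f(x)|² dμ_V + β_k. Then for all f_1,…,f_N ∈ C_c^∞(ℝ^d) with ∑_{k=1}^N π_k ∫ f_k² dμ_V = 1 one has ∑_{k=1}^N π_k ∫ f_k² log f_k² dμ_V ≤ (max_k γ_k) · ∑_{k=1}^N π_k ∫ |σ_k(x)ᵀ∇f_k(x)|² dμ_V + max_k (β_k − log π_k). -/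
open MeasureTheory

/-- defective log-Sobolev inequality (1.8) of Remark 1.1. If each
component measure satisfies a defective log-Sobolev inequality with constants
`(γ_k, β_k)` for the carré-du-champ `|σ_kᵀ∇f|²` w.r.t. `μ_V = e^V dx`, then for any
tuple `(f_1,…,f_N)` normalized by `∑ π_k ∫ f_k² dμ_V = 1` one has
`∑ π_k ∫ f_k² log f_k² dμ_V ≤ (max_k γ_k) ∑ π_k ∫ |σ_kᵀ∇f_k|² dμ_V + max_k (β_k − log π_k)`. -/
theorem defective_logSobolev_mixture
    (d N : ℕ) (hd : 1 ≤ d) (hN : 1 ≤ N)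
    (V : EuclideanSpace ℝ (Fin d) → ℝ) (hV : ContDiff ℝ 2 V)
    (hVint : ∫ x, Real.exp (V x) = 1)
    (μV : Measure (EuclideanSpace ℝ (Fin d)))
    (hμV : μV = volume.withDensity (fun x => ENNReal.ofReal (Real.exp (V x))))
    (σ : Fin N → EuclideanSpace ℝ (Fin d) → Matrix (Fin d) (Fin d) ℝ)
    (hσ : ∀ k, Continuous (σ k))
    (γ β π : Fin N → ℝ)
    (hγ : ∀ k, 0 < γ k) (hβ : ∀ k, 0 ≤ β k) (hπ : ∀ k, 0 < π k)
    (hπsum : ∑ k, π k = 1)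
    (hLS : ∀ (k : Fin N) (f : EuclideanSpace ℝ (Fin d) → ℝ),
      ContDiff ℝ (⊤ : ℕ∞) f → HasCompactSupport f →
      (∫ x, (f x) ^ 2 ∂μV) = 1 →
      (∫ x, (f x) ^ 2 * Real.log ((f x) ^ 2) ∂μV)
        ≤ γ k * (∫ x, ∑ i, (∑ j, σ k x j i * fderiv ℝ f x (EuclideanSpace.single j 1)) ^ 2 ∂μV)
            + β k)
    (f : Fin N → EuclideanSpace ℝ (Fin d) → ℝ)
    (hf : ∀ k, ContDiff ℝ (⊤ : ℕ∞) (f k) ∧ HasCompactSupport (f k))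
    (hnorm : ∑ k, π k * ∫ x, (f k x) ^ 2 ∂μV = 1) :
    ∑ k, π k * ∫ x, (f k x) ^ 2 * Real.log ((f k x) ^ 2) ∂μV
      ≤ (Finset.univ.sup' (Finset.univ_nonempty_iff.mpr (Fin.pos_iff_nonempty.mp hN)) γ)
          * ∑ k, π k *
              ∫ x, ∑ i, (∑ j, σ k x j i * fderiv ℝ (f k) x (EuclideanSpace.single j 1)) ^ 2 ∂μV
        + Finset.univ.sup' (Finset.univ_nonempty_iff.mpr (Fin.pos_iff_nonempty.mp hN))
            (fun k => β k - Real.log (π k)) := by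
  classical
  have hne : (Finset.univ : Finset (Fin N)).Nonempty :=
    Finset.univ_nonempty_iff.mpr (Fin.pos_iff_nonempty.mp hN)
  set M : ℝ := Finset.univ.sup' hne γ with hM
  set B : ℝ := Finset.univ.sup' hne (fun k => β k - Real.log (π k)) with hB
  -- the exponential density is continuous and integrable
  have hVcont : Continuous fun x : EuclideanSpace ℝ (Fin d) => Real.exp (V x) :=
    Real.continuous_exp.comp hV.continuous
  have hVintble : Integrable (fun x : EuclideanSpace ℝ (Fin d) => Real.exp (V x)) volume := by
    by_contra h
    rw [integral_undef h] at hVint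
    norm_num at hVint
  -- μV is a probability measure
  have hprob : IsProbabilityMeasure μV := by
    constructor
    rw [hμV, withDensity_apply _ MeasurableSet.univ, Measure.restrict_univ,
      ← ofReal_integral_eq_lintegral_ofReal hVintble
        (Filter.Eventually.of_forall fun x => (Real.exp_pos _).le), hVint]
    simp
  -- integrability of continuous compactly supported functions
  have hInt : ∀ g : EuclideanSpace ℝ (Fin d) → ℝ, Continuous g → HasCompactSupport g → Integrable g μV :=
    fun g hg hgs => hg.integrable_of_hasCompactSupport hgs
  -- vanishing lemma
  have hzero : ∀ g : EuclideanSpace ℝ (Fin d) → ℝ, Continuous g → HasCompactSupport g →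
      (∫ x, (g x) ^ 2 ∂μV) = 0 → ∀ x, g x = 0 := by
    intro g hg hgs hint
    have hcont2 : Continuous fun x => (g x) ^ 2 := hg.pow 2
    have hsupp2 : HasCompactSupport fun x => (g x) ^ 2 := by
      have : ((fun t : ℝ => t ^ 2) ∘ g) = fun x => (g x) ^ 2 := rfl
      rw [← this]
      exact hgs.comp_left (by norm_num)
    have hInt2 : Integrable (fun x => (g x) ^ 2) μV := hInt _ hcont2 hsupp2
    have hae : (fun x => (g x) ^ 2) =ᵐ[μV] 0 :=
      (integral_eq_zero_iff_of_nonneg (fun x => sq_nonneg _) hInt2).mp hint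
    rw [hμV] at hae
    have hmeas : Measurable fun x : EuclideanSpace ℝ (Fin d) => ENNReal.ofReal (Real.exp (V x)) :=
      ENNReal.measurable_ofReal.comp hVcont.measurable
    have hae' : ∀ᵐ x ∂(volume : Measure (EuclideanSpace ℝ (Fin d))),
        ENNReal.ofReal (Real.exp (V x)) ≠ 0 → (g x) ^ 2 = (0 : EuclideanSpace ℝ (Fin d) → ℝ) x :=
      (ae_withDensity_iff hmeas).mp hae
    have hae'' : (fun x => (g x) ^ 2) =ᵐ[(volume : Measure (EuclideanSpace ℝ (Fin d)))] 0 := by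
      filter_upwards [hae'] with x hx
      exact hx (by simp [Real.exp_pos])
    have := (Continuous.ae_eq_iff_eq (volume : Measure (EuclideanSpace ℝ (Fin d))) hcont2 continuous_const).mp hae''
    intro x
    have hx : (g x) ^ 2 = 0 := congrFun this x
    exact pow_eq_zero_iff two_ne_zero |>.mp hx
  -- abbreviations
  set a : Fin N → ℝ := fun k => ∫ x, (f k x) ^ 2 ∂μV with ha
  set I : Fin N → ℝ := fun k => ∫ x, (f k x) ^ 2 * Real.log ((f k x) ^ 2) ∂μV with hI
  set En : Fin N → ℝ := fun k =>
    ∫ x, ∑ i, (∑ j, σ k x j i * fderiv ℝ (f k) x (EuclideanSpace.single j 1)) ^ 2 ∂μV with hEn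
  have ha_nonneg : ∀ k, 0 ≤ a k := fun k => integral_nonneg fun x => sq_nonneg _
  have hEn_nonneg : ∀ k, 0 ≤ En k := fun k =>
    integral_nonneg fun x => Finset.sum_nonneg fun i _ => sq_nonneg _
  have hM_pos : 0 < M := lt_of_lt_of_le (hγ (Fin.mk 0 hN)) (Finset.le_sup' _ (Finset.mem_univ _))
  -- key per-component estimate
  have key : ∀ k, π k * I k
      ≤ M * (π k * En k) + (π k * a k) * B + (π k * a k) * Real.log (π k * a k) := by
    intro k
    rcases eq_or_lt_of_le (ha_nonneg k) with h0 | hpos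
    · -- a k = 0 : f k vanishes identically
      have hf0 : ∀ x, f k x = 0 := hzero (f k) (hf k).1.continuous (hf k).2 h0.symm
      have hI0 : I k = 0 := by
        simp only [hI]
        have : (fun x => (f k x) ^ 2 * Real.log ((f k x) ^ 2)) = fun _ => (0 : ℝ) := by
          funext x; simp [hf0 x]
        rw [this, integral_const]; simp
      rw [hI0, ← h0]
      have h1 : 0 ≤ M * (π k * En k) :=
        mul_nonneg hM_pos.le (mul_nonneg (hπ k).le (hEn_nonneg k))
      simp only [mul_zero, zero_mul, add_zero]
      linarith
    · -- a k > 0 : rescale and apply the component LSI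
      set c : ℝ := (Real.sqrt (a k))⁻¹ with hc
      have hsq : Real.sqrt (a k) > 0 := Real.sqrt_pos.mpr hpos
      have hcpos : 0 < c := inv_pos.mpr hsq
      have hc2 : c ^ 2 = (a k)⁻¹ := by
        rw [hc, inv_pow, Real.sq_sqrt hpos.le]
      set g : EuclideanSpace ℝ (Fin d) → ℝ := fun x => c * f k x with hg
      have hgsmooth : ContDiff ℝ (⊤ : ℕ∞) g := contDiff_const.mul (hf k).1
      have hgsupp : HasCompactSupport g := by
        have : g = ((fun t : ℝ => c * t) ∘ f k) := rfl
        rw [this]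
        exact (hf k).2.comp_left (by simp)
      -- integral of g²
      have hg2 : (∫ x, (g x) ^ 2 ∂μV) = 1 := by
        have : (fun x => (g x) ^ 2) = fun x => c ^ 2 * (f k x) ^ 2 := by
          funext x; rw [hg]; ring
        rw [this, integral_const_mul]
        show c ^ 2 * a k = 1
        rw [hc2, inv_mul_cancel₀ (ne_of_gt hpos)]
      -- integrability of the two pieces
      have hint_sq : Integrable (fun x => (f k x) ^ 2) μV := by
        refine hInt _ ((hf k).1.continuous.pow 2) ?_
        have : (fun x => (f k x) ^ 2) = ((fun t : ℝ => t ^ 2) ∘ f k) := rfl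
        rw [this]; exact (hf k).2.comp_left (by norm_num)
      have hint_ent : Integrable (fun x => (f k x) ^ 2 * Real.log ((f k x) ^ 2)) μV := by
        refine hInt _ ?_ ?_
        · exact (Real.continuous_mul_log.comp ((hf k).1.continuous.pow 2))
        · have : (fun x => (f k x) ^ 2 * Real.log ((f k x) ^ 2))
              = ((fun t : ℝ => t ^ 2 * Real.log (t ^ 2)) ∘ f k) := rfl
          rw [this]
          exact (hf k).2.comp_left (by norm_num)
      -- entropy of g
      have hpt : ∀ x, (g x) ^ 2 * Real.log ((g x) ^ 2)
          = c ^ 2 * ((f k x) ^ 2 * Real.log ((f k x) ^ 2))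
            + (c ^ 2 * Real.log (c ^ 2)) * (f k x) ^ 2 := by
        intro x
        rcases eq_or_ne (f k x) 0 with h | h
        · simp [hg, h]
        · have h2 : (f k x) ^ 2 ≠ 0 := pow_ne_zero _ h
          have hc2ne : (c : ℝ) ^ 2 ≠ 0 := pow_ne_zero _ (ne_of_gt hcpos)
          have : (g x) ^ 2 = c ^ 2 * (f k x) ^ 2 := by rw [hg]; ring
          rw [this, Real.log_mul hc2ne h2]
          ring
      have hIg : (∫ x, (g x) ^ 2 * Real.log ((g x) ^ 2) ∂μV)
          = c ^ 2 * I k + (c ^ 2 * Real.log (c ^ 2)) * a k := by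
        simp_rw [hpt]
        rw [integral_add (hint_ent.const_mul _) (hint_sq.const_mul _),
          integral_const_mul, integral_const_mul]
      -- energy of g
      have hdg : ∀ x, fderiv ℝ g x = c • fderiv ℝ (f k) x := by
        intro x
        exact fderiv_const_mul ((hf k).1.differentiable (by simp) x) c
      have hEg : (∫ x, ∑ i, (∑ j, σ k x j i * fderiv ℝ g x (EuclideanSpace.single j 1)) ^ 2 ∂μV)
          = c ^ 2 * En k := by
        rw [hEn, ← integral_const_mul]
        congr 1
        funext x
        rw [hdg x, Finset.mul_sum]
        refine Finset.sum_congr rfl fun i _ => ?_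
        have : ∑ j, σ k x j i * (c • fderiv ℝ (f k) x) (EuclideanSpace.single j 1)
            = c * ∑ j, σ k x j i * fderiv ℝ (f k) x (EuclideanSpace.single j 1) := by
          rw [Finset.mul_sum]
          refine Finset.sum_congr rfl fun j _ => ?_
          simp only [ContinuousLinearMap.smul_apply, smul_eq_mul]
          ring
        rw [this, mul_pow]
      -- apply the LSI to g
      have hls := hLS k g hgsmooth hgsupp hg2
      rw [hIg, hEg] at hls
      -- deduce the unnormalized inequality
      have hlogc : Real.log (c ^ 2) = - Real.log (a k) := by
        rw [hc2, Real.log_inv]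
      have hIbound : I k ≤ γ k * En k + a k * β k + a k * Real.log (a k) := by
        have hsc : c ^ 2 * a k = 1 := by rw [hc2, inv_mul_cancel₀ (ne_of_gt hpos)]
        have h1 : c ^ 2 * I k - Real.log (a k) ≤ γ k * (c ^ 2 * En k) + β k := by
          calc c ^ 2 * I k - Real.log (a k)
              = c ^ 2 * I k + (c ^ 2 * Real.log (c ^ 2)) * a k := by
                rw [hlogc]; linear_combination Real.log (a k) * hsc
            _ ≤ γ k * (c ^ 2 * En k) + β k := hls
        have h2 := mul_le_mul_of_nonneg_left h1 hpos.le
        have e1 : a k * (c ^ 2 * I k - Real.log (a k)) = I k - a k * Real.log (a k) := by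
          linear_combination I k * hsc
        have e2 : a k * (γ k * (c ^ 2 * En k) + β k) = γ k * En k + a k * β k := by
          linear_combination (γ k * En k) * hsc
        rw [e1, e2] at h2
        linarith
      -- combine with the max constants
      have hγM : γ k ≤ M := Finset.le_sup' _ (Finset.mem_univ k)
      have hβB : β k - Real.log (π k) ≤ B :=
        Finset.le_sup' (fun j => β j - Real.log (π j)) (Finset.mem_univ k)
      have hlogt : Real.log (π k * a k) = Real.log (π k) + Real.log (a k) :=
        Real.log_mul (ne_of_gt (hπ k)) (ne_of_gt hpos)
      have hta : 0 < π k * a k := mul_pos (hπ k) hpos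
      have step1 : π k * I k ≤ π k * (γ k * En k + a k * β k + a k * Real.log (a k)) :=
        mul_le_mul_of_nonneg_left hIbound (hπ k).le
      have step2 : π k * (γ k * En k) ≤ M * (π k * En k) := by
        have := mul_le_mul_of_nonneg_right hγM (hEn_nonneg k)
        nlinarith [(hπ k).le]
      have step3 : π k * (a k * β k) + π k * (a k * Real.log (a k))
          ≤ (π k * a k) * B + (π k * a k) * Real.log (π k * a k) := by
        have h3 : π k * (a k * β k) + π k * (a k * Real.log (a k))
            = (π k * a k) * (β k - Real.log (π k))
              + (π k * a k) * (Real.log (π k) + Real.log (a k)) := by ring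
        rw [h3, hlogt]
        have := mul_le_mul_of_nonneg_left hβB hta.le
        linarith
      calc π k * I k ≤ π k * (γ k * En k + a k * β k + a k * Real.log (a k)) := step1
        _ = π k * (γ k * En k) + (π k * (a k * β k) + π k * (a k * Real.log (a k))) := by ring
        _ ≤ M * (π k * En k) + ((π k * a k) * B + (π k * a k) * Real.log (π k * a k)) := by
            linarith [step2, step3]
        _ = M * (π k * En k) + (π k * a k) * B + (π k * a k) * Real.log (π k * a k) := by ring
  -- sum the per-component estimates
  have hsum_t : ∑ k, π k * a k = 1 := hnorm
  have ht_nonneg : ∀ k, 0 ≤ π k * a k := fun k => mul_nonneg (hπ k).le (ha_nonneg k)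
  have ht_le_one : ∀ k, π k * a k ≤ 1 := by
    intro k
    rw [← hsum_t]
    exact Finset.single_le_sum (fun j _ => ht_nonneg j) (Finset.mem_univ k)
  have hent_nonpos : ∑ k, (π k * a k) * Real.log (π k * a k) ≤ 0 := by
    refine Finset.sum_nonpos fun k _ => ?_
    have hlog : Real.log (π k * a k) ≤ 0 := Real.log_nonpos (ht_nonneg k) (ht_le_one k)
    exact mul_nonpos_of_nonneg_of_nonpos (ht_nonneg k) hlog
  calc ∑ k, π k * I k
      ≤ ∑ k, (M * (π k * En k) + (π k * a k) * B + (π k * a k) * Real.log (π k * a k)) :=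
        Finset.sum_le_sum fun k _ => key k
    _ = M * (∑ k, π k * En k) + (∑ k, π k * a k) * B
        + ∑ k, (π k * a k) * Real.log (π k * a k) := by
        rw [Finset.sum_add_distrib, Finset.sum_add_distrib, Finset.mul_sum, Finset.sum_mul]
    _ ≤ M * (∑ k, π k * En k) + 1 * B + 0 := by
        rw [hsum_t]
        linarith [hent_nonpos]
    _ = M * (∑ k, π k * En k) + B := by ring
end

section
/- Let N ≥ 1 and let (q_{ij})_{1≤i,j≤N} be a conservative Q-matrix, i.e. q_{ij} ≥ 0 for i ≠ j and q_{ii} = −∑_{j≠i} q_{ij}. Then for all real numbers f_1,…,f_N and all π_1,…,π_N ∈ ℝ one has the identity ∑_{i=1}^N π_i ∑_{j=1}^N q_{ij} · min(f_j⁺,1) · (f_i − min(f_i⁺,1)) = −∑_{i=1}^N π_i ∑_{j≠i} q_{ij} [ min(f_j⁺,1)·f_i⁻ + (1 − min(f_j⁺,1))·(f_i−1)⁺ ], where f⁺ = max(f,0), f⁻ = max(−f,0) and (f−1)⁺ = max(f−1,0). In particular, if π_1,…,π_N ≥ 0 then ∑_{i=1}^N π_i ∑_{j=1}^N q_{ij}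 · min(f_j⁺,1) · (f_i − min(f_i⁺,1)) ≤ 0. -/
/-!
Writing `g = min f⁺ 1`, conservation of row `i` turns `∑ j, q i j * g j` into
`∑ j ≠ i, q i j * (g j - g i)`. Since `f i - g i = (f i - 1)⁺ - (f i)⁻`, where `g i = 0` on the
support of `(f i)⁻` and `g i = 1` on that of `(f i - 1)⁺`, each term
`(g j - g i) * (f i - g i)` equals `-(g j * (f i)⁻ + (1 - g j) * (f i - 1)⁺)`, which is
nonpositive because `0 ≤ g j ≤ 1`.
-/

open Finset

theorem sum_mul_eq_sum_erase_mul_sub_of_eq_neg_sum_erase {ι R : Type*} [Fintype ι]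
    [DecidableEq ι] [CommRing R] (q g : ι → R) (i : ι)
    (hcons : q i = -∑ j ∈ univ.erase i, q j) :
    ∑ j, q j * g j = ∑ j ∈ univ.erase i, q j * (g j - g i) := by
  rw [← add_sum_erase _ _ (mem_univ i), hcons]
  simp only [mul_sub, sum_sub_distrib, ← sum_mul]
  ring

theorem sub_min_max_mul_sub_min_max (c a : ℝ) :
    (c - min (max a 0) 1) * (a - min (max a 0) 1)
      = -(c * max (-a) 0 + (1 - c) * max (a - 1) 0) := by
  rcases le_total a 0 with h₀ | h₀
  · rw [max_eq_right h₀, max_eq_left (neg_nonneg.2 h₀), max_eq_right (by linarith)]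
    simp
  rcases le_total a 1 with h₁ | h₁
  · rw [max_eq_left h₀, min_eq_left h₁, max_eq_right (by linarith), max_eq_right (by linarith)]
    ring
  · rw [max_eq_left h₀, min_eq_right h₁, max_eq_right (by linarith), max_eq_left (by linarith)]
    ring

theorem convex_comb_max_neg_max_sub_one_nonneg {c : ℝ} (hc₀ : 0 ≤ c) (hc₁ : c ≤ 1) (a : ℝ) :
    0 ≤ c * max (-a) 0 + (1 - c) * max (a - 1) 0 :=
  add_nonneg (mul_nonneg hc₀ (le_max_right _ _))
    (mul_nonneg (sub_nonneg.2 hc₁) (le_max_right _ _))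

theorem sum_mul_min_max_mul_sub_min_max_eq {ι : Type*} [Fintype ι] [DecidableEq ι]
    (q f : ι → ℝ) (i : ι) (hcons : q i = -∑ j ∈ univ.erase i, q j) :
    ∑ j, q j * min (max (f j) 0) 1 * (f i - min (max (f i) 0) 1)
      = -∑ j ∈ univ.erase i,
          q j * (min (max (f j) 0) 1 * max (-(f i)) 0
                  + (1 - min (max (f j) 0) 1) * max (f i - 1) 0) := by
  rw [← sum_mul, sum_mul_eq_sum_erase_mul_sub_of_eq_neg_sum_erase q _ i hcons, sum_mul,
    ← sum_neg_distrib]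
  refine sum_congr rfl fun j _ => ?_
  rw [mul_assoc, sub_min_max_mul_sub_min_max, mul_neg]

theorem conservative_Q_matrix_normal_contraction_general
    (N : ℕ) (q : Fin N → Fin N → ℝ)
    (hq : ∀ i j, i ≠ j → 0 ≤ q i j)
    (hcons : ∀ i, q i i = -∑ j ∈ Finset.univ.erase i, q i j)
    (f π : Fin N → ℝ) :
    (∑ i, π i * ∑ j, q i j * min (max (f j) 0) 1 * (f i - min (max (f i) 0) 1)
      = -∑ i, π i * ∑ j ∈ Finset.univ.erase i,
          q i j * (min (max (f j) 0) 1 * max (-(f i)) 0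
                    + (1 - min (max (f j) 0) 1) * max (f i - 1) 0))
    ∧ ((∀ i, 0 ≤ π i) →
        ∑ i, π i * ∑ j, q i j * min (max (f j) 0) 1 * (f i - min (max (f i) 0) 1) ≤ 0) := by
  have rows (i : Fin N) := sum_mul_min_max_mul_sub_min_max_eq (q i) f i (hcons i)
  simp only [rows, mul_neg, sum_neg_distrib, neg_nonpos, true_and]
  refine fun hπ => sum_nonneg fun i _ => mul_nonneg (hπ i) (sum_nonneg fun j hj => ?_)
  exact mul_nonneg (hq i j (ne_of_mem_erase hj).symm)
    (convex_comb_max_neg_max_sub_one_nonneg (le_min (le_max_right _ _) zero_le_one)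
      (min_le_right _ _) _)

/-- For a conservative Q-matrix `q` (off-diagonal entries nonnegative,
`q i i = -∑_{j≠i} q i j`), the normal-contraction identity
`∑ i, π i * ∑ j, q i j * min (f j)⁺ 1 * (f i - min (f i)⁺ 1)
  = -∑ i, π i * ∑_{j≠i} q i j * (min (f j)⁺ 1 * (f i)⁻ + (1 - min (f j)⁺ 1) * (f i - 1)⁺)`
holds, and consequently the left-hand side is nonpositive whenever all `π i ≥ 0`. -/
theorem conservative_Q_matrix_normal_contraction
    (N : ℕ) (hN : 1 ≤ N) (q : Fin N → Fin N → ℝ)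
    (hq : ∀ i j, i ≠ j → 0 ≤ q i j)
    (hcons : ∀ i, q i i = -∑ j ∈ Finset.univ.erase i, q i j)
    (f π : Fin N → ℝ) :
    (∑ i, π i * ∑ j, q i j * min (max (f j) 0) 1 * (f i - min (max (f i) 0) 1)
      = -∑ i, π i * ∑ j ∈ Finset.univ.erase i,
          q i j * (min (max (f j) 0) 1 * max (-(f i)) 0
                    + (1 - min (max (f j) 0) 1) * max (f i - 1) 0))
    ∧ ((∀ i, 0 ≤ π i) →
        ∑ i, π i * ∑ j, q i j * min (max (f j) 0) 1 * (f i - min (max (f i) 0) 1) ≤ 0) :=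
  conservative_Q_matrix_normal_contraction_general N q hq hcons f π
end

section
/- For all real numbers a > 0, b > 0, θ ∈ [0,1) and δ > 0 satisfying δ²·(1+(1−θ)a) < 1+(1−θ)(a+b)−4θab, there exist real numbers w₁ > 0 and w₂ with 0 < w₂ < 1/(2δ²) such that 1+(1−θ)a−1/(2w₁) > 0 and (1+(1−θ)a−1/(2w₁))·(1+(1−θ)b−1/(2w₂)) − (1+θ)²ab > 0. -/
/-- Example 1.1 of the paper, first arithmetic claim. If
`δ²(1+(1−θ)a) < 1+(1−θ)(a+b)−4θab` with `a,b,δ > 0` and `θ ∈ [0,1)`, then there exist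
`w₁ > 0` and `0 < w₂ < 1/(2δ²)` making `-(K+Q̄)` a nonsingular M-matrix, i.e.
`1+(1−θ)a−1/(2w₁) > 0` and
`(1+(1−θ)a−1/(2w₁))(1+(1−θ)b−1/(2w₂)) − (1+θ)²ab > 0`. -/
theorem example_M_matrix_exists_weights
    (a b θ δ : ℝ) (ha : 0 < a) (hb : 0 < b) (hθ0 : 0 ≤ θ) (hθ1 : θ < 1) (hδ : 0 < δ)
    (hcond : δ ^ 2 * (1 + (1 - θ) * a) < 1 + (1 - θ) * (a + b) - 4 * θ * a * b) :
    ∃ w₁ w₂ : ℝ, 0 < w₁ ∧ 0 < w₂ ∧ w₂ < 1 / (2 * δ ^ 2) ∧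
      0 < 1 + (1 - θ) * a - 1 / (2 * w₁) ∧
      0 < (1 + (1 - θ) * a - 1 / (2 * w₁)) * (1 + (1 - θ) * b - 1 / (2 * w₂))
            - (1 + θ) ^ 2 * a * b := by
  set A : ℝ := 1 + (1 - θ) * a with hAdef
  set B : ℝ := 1 + (1 - θ) * b with hBdef
  set C : ℝ := (1 + θ) ^ 2 * a * b with hCdef
  have h1θ : 0 < 1 - θ := by linarith
  have hA : 0 < A := by have := mul_pos h1θ ha; simp only [hAdef]; linarith
  have hB : 0 < B := by have := mul_pos h1θ hb; simp only [hBdef]; linarith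
  have hC : 0 < C := by
    have : 0 < (1 + θ) ^ 2 := by positivity
    simp only [hCdef]; positivity
  set E : ℝ := A * (B - δ ^ 2) - C with hEdef
  have hE : 0 < E := by
    have hid : A * B - C = 1 + (1 - θ) * (a + b) - 4 * θ * a * b := by
      simp only [hAdef, hBdef, hCdef]; ring
    simp only [hEdef]; nlinarith
  set ε : ℝ := E / (2 * A) with hεdef
  have hε : 0 < ε := by positivity
  set D : ℝ := B - δ ^ 2 - ε with hDdef
  have hAD : A * D = E / 2 + C := by
    simp only [hDdef, hεdef, hEdef]; field_simp; ring
  have hD : 0 < D := by nlinarith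
  set η : ℝ := min (A / 2) (E / (4 * D)) with hηdef
  have hη : 0 < η := lt_min (by positivity) (by positivity)
  have hηA : η < A := lt_of_le_of_lt (min_le_left _ _) (by linarith)
  have hηD : η * D ≤ E / 4 := by
    have h1 : η ≤ E / (4 * D) := min_le_right _ _
    have := mul_le_mul_of_nonneg_right h1 hD.le
    calc η * D ≤ E / (4 * D) * D := this
      _ = E / 4 := by field_simp
  refine ⟨1 / (2 * η), 1 / (2 * (δ ^ 2 + ε)), by positivity, by positivity, ?_, ?_, ?_⟩
  · apply one_div_lt_one_div_of_lt (by positivity)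
    nlinarith
  · have h1 : 1 / (2 * (1 / (2 * η))) = η := by field_simp
    rw [h1]; linarith
  · have h1 : 1 / (2 * (1 / (2 * η))) = η := by field_simp
    have h2 : 1 / (2 * (1 / (2 * (δ ^ 2 + ε)))) = δ ^ 2 + ε := by
      have : (0:ℝ) < δ ^ 2 + ε := by positivity
      field_simp
    rw [h1, h2]
    have : (A - η) * (B - (δ ^ 2 + ε)) - C = E / 2 - η * D := by
      have hBD : B - (δ ^ 2 + ε) = D := by simp only [hDdef]; ring
      rw [hBD]; linear_combination hAD
    rw [this]; linarith
end
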